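/- Let A be a Hermitian (or real symmetric) n×n matrix and f_1,…,f_k an orthonormal family of vectors such that (A f_i, f_i) ≥ λ for all i and (A f_i, f_j) = 0 whenever i ≠ j. Then A has at least k eigenvalues (counted with multiplicity) greater than or equal to λ. -/

import Mathlib

/-!
Conjugating by the unitary matrix of eigenvectors turns `A` into the diagonal matrix of its
eigenvalues and `f` into another orthonormal family with the same Gram data, so it suffices to
treat a diagonal `A`. If fewer than `k` eigenvalues were `≥ λ`, the `k`-dimensional span of the
`f i` would contain a nonzero `w` vanishing on the coordinates of those eigenvalues. Then
`⟨A w, w⟩ < λ ‖w‖²`, whereas expanding `w` in the `A`-orthogonal family `f` gives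
`⟨A w, w⟩ ≥ λ ‖w‖²`.
-/
open Matrix RCLike

variable {𝕜 m ι : Type*} [RCLike 𝕜] [Fintype m] [Fintype ι]

lemma re_star_dotProduct_diagonal_mulVec [DecidableEq m] (g v : m → 𝕜) :
    re (star v ⬝ᵥ diagonal g *ᵥ v) = ∑ i, ‖v i‖ ^ 2 * re (g i) := by
  simp only [dotProduct, mulVec_diagonal, Pi.star_apply, map_sum]
  refine Finset.sum_congr rfl fun i _ => ?_
  rw [RCLike.star_def, mul_left_comm, RCLike.conj_mul, mul_comm, ← ofReal_pow, re_ofReal_mul]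

lemma re_star_dotProduct_self (v : m → 𝕜) : re (star v ⬝ᵥ v) = ∑ i, ‖v i‖ ^ 2 := by
  classical
  simpa using re_star_dotProduct_diagonal_mulVec 1 v

lemma mul_re_star_dotProduct_self_le [DecidableEq m] {lam : ℝ} {g : m → 𝕜}
    (hg : ∀ i, lam ≤ re (g i)) (v : m → 𝕜) :
    lam * re (star v ⬝ᵥ v) ≤ re (star v ⬝ᵥ diagonal g *ᵥ v) := by
  rw [re_star_dotProduct_diagonal_mulVec, re_star_dotProduct_self, Finset.mul_sum]
  exact Finset.sum_le_sum fun i _ => by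
    rw [mul_comm lam]; exact mul_le_mul_of_nonneg_left (hg i) (by positivity)

lemma re_star_dotProduct_diagonal_mulVec_lt [DecidableEq m] {lam : ℝ} (μ : m → ℝ) {v : m → 𝕜}
    (hv : v ≠ 0) (hvμ : ∀ j, lam ≤ μ j → v j = 0) :
    re (star v ⬝ᵥ diagonal (ofReal ∘ μ) *ᵥ v) < lam * re (star v ⬝ᵥ v) := by
  rw [re_star_dotProduct_diagonal_mulVec, re_star_dotProduct_self, Finset.mul_sum]
  obtain ⟨j, hj⟩ := Function.ne_iff.mp hv
  have hμ : ∀ j, v j ≠ 0 → μ j < lam := fun i hi => not_le.mp (mt (hvμ i) hi)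
  refine Finset.sum_lt_sum (fun i _ => ?_) ⟨j, Finset.mem_univ _, ?_⟩
  · by_cases hi : v i = 0
    · simp [hi]
    · simpa [mul_comm lam] using mul_le_mul_of_nonneg_left (hμ i hi).le (by positivity)
  · simpa [mul_comm lam] using mul_lt_mul_of_pos_left (hμ j hj) (by positivity)

lemma star_mulVec_dotProduct_mulVec_mulVec (P : Matrix m ι 𝕜) (M : Matrix m m 𝕜) (c : ι → 𝕜) :
    star (P *ᵥ c) ⬝ᵥ M *ᵥ P *ᵥ c = star c ⬝ᵥ (Pᴴ * M * P) *ᵥ c := by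
  rw [star_mulVec, ← dotProduct_mulVec, mulVec_mulVec, mulVec_mulVec, Matrix.mul_assoc]

theorem card_le_card_filter_le_of_conjTranspose_mul_diagonal_mul [DecidableEq m] [DecidableEq ι]
    {P : Matrix m ι 𝕜} {μ : m → ℝ} {g : ι → 𝕜} {lam : ℝ} (hP : Pᴴ * P = 1)
    (hPμP : Pᴴ * diagonal (ofReal ∘ μ : m → 𝕜) * P = diagonal g) (hg : ∀ i, lam ≤ re (g i)) :
    Fintype.card ι ≤ (Finset.univ.filter fun j => lam ≤ μ j).card := by
  set S := Finset.univ.filter fun j => lam ≤ μ j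
  by_contra! hS
  let restrict : (ι → 𝕜) →ₗ[𝕜] (S → 𝕜) :=
    LinearMap.funLeft 𝕜 𝕜 (Subtype.val : S → m) ∘ₗ P.mulVecLin
  obtain ⟨c, hc, hc0⟩ := (Submodule.ne_bot_iff _).mp <|
    LinearMap.ker_ne_bot_of_finrank_lt (f := restrict) (by simpa using hS)
  set d := P *ᵥ c
  have hdS : ∀ j, lam ≤ μ j → d j = 0 := fun j hj =>
    congrFun (LinearMap.mem_ker.mp hc) ⟨j, Finset.mem_filter.mpr ⟨Finset.mem_univ j, hj⟩⟩
  have hnorm : star d ⬝ᵥ d = star c ⬝ᵥ c := by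
    simpa [hP] using star_mulVec_dotProduct_mulVec_mulVec P 1 c
  have hcd : c = Pᴴ *ᵥ d := by rw [mulVec_mulVec, hP, one_mulVec]
  have hd0 : d ≠ 0 := fun hd => hc0 (by rw [hcd, hd, mulVec_zero])
  have hlow := mul_re_star_dotProduct_self_le hg c
  have hhigh := re_star_dotProduct_diagonal_mulVec_lt μ hd0 hdS
  rw [star_mulVec_dotProduct_mulVec_mulVec, hPμP, hnorm] at hhigh
  linarith

omit [Fintype ι] in
lemma conjTranspose_mul_mul_apply_of_cols (f : ι → m → 𝕜) (M : Matrix m m 𝕜) (i j : ι) :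
    ((of f)ᵀᴴ * M * (of f)ᵀ) i j = star (f i) ⬝ᵥ M *ᵥ f j := by
  simp only [mul_apply, mulVec, dotProduct, conjTranspose_apply, transpose_apply, of_apply,
    Pi.star_apply, Finset.sum_mul, Finset.mul_sum]
  rw [Finset.sum_comm]
  exact Finset.sum_congr rfl fun _ _ => Finset.sum_congr rfl fun _ _ => by ring

omit [Fintype ι] in
lemma conjTranspose_star_mul_mul_star_mul_mul [DecidableEq m] {U : Matrix m m 𝕜}
    (hU : U * star U = 1) (F : Matrix m ι 𝕜) (M : Matrix m m 𝕜) :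
    (star U * F)ᴴ * (star U * M * U) * (star U * F) = Fᴴ * M * F := by
  rw [star_eq_conjTranspose] at hU ⊢
  rw [conjTranspose_mul, conjTranspose_conjTranspose]
  simp only [Matrix.mul_assoc]
  rw [← Matrix.mul_assoc U Uᴴ, hU, Matrix.one_mul, ← Matrix.mul_assoc U Uᴴ, hU,
    Matrix.one_mul]

/-- If `A` is a Hermitian `n × n` complex matrix and `f 1, …, f k` is an orthonormal family
with `⟨A f i, f i⟩ ≥ λ` for all `i` and `⟨A f i, f j⟩ = 0` for `i ≠ j`, then `A` has at least
`k` eigenvalues (with multiplicity) that are `≥ λ`. -/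
theorem hermitian_count_eigenvalues_ge {n k : ℕ} (A : Matrix (Fin n) (Fin n) ℂ)
    (hA : A.IsHermitian) (lam : ℝ) (f : Fin k → (Fin n → ℂ))
    (horth : ∀ i j, star (f i) ⬝ᵥ f j = if i = j then 1 else 0)
    (hdiag : ∀ i, lam ≤ (star (f i) ⬝ᵥ A.mulVec (f i)).re)
    (hoff : ∀ i j, i ≠ j → star (f i) ⬝ᵥ A.mulVec (f j) = 0) :
    k ≤ (Finset.univ.filter fun i => lam ≤ hA.eigenvalues i).card := by
  set F := (of f)ᵀ
  set U : Matrix (Fin n) (Fin n) ℂ := ↑hA.eigenvectorUnitary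
  have hFF : Fᴴ * F = 1 := by
    ext i j
    simpa [horth, one_apply] using conjTranspose_mul_mul_apply_of_cols f 1 i j
  have hFAF : Fᴴ * A * F = diagonal fun i => star (f i) ⬝ᵥ A *ᵥ f i := by
    ext i j
    rw [conjTranspose_mul_mul_apply_of_cols]
    by_cases hij : i = j
    · simp [hij]
    · simp [hij, hoff i j hij]
  have hUU : U * star U = 1 := Unitary.coe_mul_star_self _
  have hD : star U * A * U = diagonal (ofReal ∘ hA.eigenvalues : Fin n → ℂ) := by
    simpa using hA.conjStarAlgAut_star_eigenvectorUnitary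
  have hPP : (star U * F)ᴴ * (star U * F) = 1 := by
    simpa [U, hFF] using conjTranspose_star_mul_mul_star_mul_mul hUU F 1
  have hPDP : (star U * F)ᴴ * diagonal (ofReal ∘ hA.eigenvalues : Fin n → ℂ) * (star U * F) =
      diagonal fun i => star (f i) ⬝ᵥ A *ᵥ f i := by
    rw [← hD, conjTranspose_star_mul_mul_star_mul_mul hUU, hFAF]
  simpa using card_le_card_filter_le_of_conjTranspose_mul_diagonal_mul hPP hPDP hdiag
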